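/- Let $(p_j)$ be a positive non-increasing sequence tending to $0$ and let $k$ be a positive integer. Then the following are equivalent: (a) there is $x_0 > 0$ such that $\#\{j : x/2 < p_j \le x\} \le k$ for all $0 < x < x_0$; (b) there is $j_0$ such that $p_{j+k} \le p_j/2$ for all $j \ge j_0$. -/
import Mathlib


open Real Set Filter

theorem stmt10 (p : ℕ → ℝ) (hpos : ∀ j, 0 < p j) (hmono : ∀ j, p (j + 1) ≤ p j)
    (hlim : Tendsto p atTop (nhds 0)) (k : ℕ) (hk : 0 < k) :
    (∃ x₀ : ℝ, 0 < x₀ ∧ ∀ x : ℝ, 0 < x → x < x₀ →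
        ({j : ℕ | x / 2 < p j ∧ p j ≤ x}).ncard ≤ k) ↔
    (∃ j₀ : ℕ, ∀ j : ℕ, j₀ ≤ j → p (j + k) ≤ p j / 2) := by
  have hanti : ∀ i j : ℕ, i ≤ j → p j ≤ p i := by
    intro i j hij
    induction j with
    | zero => simp_all
    | succ n ih =>
      rcases Nat.lt_or_ge i (n + 1) with h | h
      · exact (hmono n).trans (ih (Nat.lt_succ_iff.mp h))
      · have : i = n + 1 := le_antisymm hij h
        simp [this]
  constructor
  · rintro ⟨x₀, hx₀, hcount⟩
    obtain ⟨j₀, hj₀⟩ := (eventually_atTop.mp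
      (hlim.eventually_lt_const hx₀))
    refine ⟨j₀, fun j hj => ?_⟩
    by_contra hcon
    push_neg at hcon
    -- the set for x = p j contains Icc j (j+k), giving k+1 elements
    have hxpos : 0 < p j := hpos j
    have hxlt : p j < x₀ := hj₀ j hj
    have hsub : Set.Icc j (j + k) ⊆ {i : ℕ | p j / 2 < p i ∧ p i ≤ p j} := by
      rintro i ⟨hi1, hi2⟩
      exact ⟨lt_of_lt_of_le hcon (hanti i (j + k) hi2), hanti j i hi1⟩
    -- finiteness of the big set
    obtain ⟨N, hN⟩ := eventually_atTop.mp
      (hlim.eventually_lt_const (by positivity : (0:ℝ) < p j / 2))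
    have hfin : ({i : ℕ | p j / 2 < p i ∧ p i ≤ p j}).Finite := by
      apply (Set.finite_Iio N).subset
      intro i hi
      by_contra hiN
      simp only [Set.mem_Iio, not_lt] at hiN
      exact absurd (hN i hiN) (not_lt.mpr hi.1.le)
    have h1 : (Set.Icc j (j + k)).ncard ≤ ({i : ℕ | p j / 2 < p i ∧ p i ≤ p j}).ncard :=
      Set.ncard_le_ncard hsub hfin
    have h2 : (Set.Icc j (j + k)).ncard = k + 1 := by
      rw [← Finset.coe_Icc, Set.ncard_coe_finset, Nat.card_Icc]
      omega
    have h3 := hcount (p j) hxpos hxlt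
    omega
  · rintro ⟨j₀, hj₀⟩
    refine ⟨p j₀, hpos j₀, fun x hx hxlt => ?_⟩
    set S : Set ℕ := {j : ℕ | x / 2 < p j ∧ p j ≤ x} with hS
    rcases S.eq_empty_or_nonempty with he | hne
    · simp [he]
    · have hmem : sInf S ∈ S := Nat.sInf_mem hne
      set m := sInf S with hm
      have hmge : j₀ ≤ m := by
        by_contra h
        push_neg at h
        have := hanti m j₀ h.le
        exact absurd (hmem.2.trans_lt hxlt) (not_lt.mpr (hanti m j₀ h.le))
      have hsub : S ⊆ Set.Ico m (m + k) := by
        intro j hj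
        refine ⟨Nat.sInf_le hj, ?_⟩
        by_contra h
        push_neg at h
        have h1 : p (m + k) ≤ p m / 2 := hj₀ m hmge
        have h2 : p j ≤ p (m + k) := hanti (m + k) j h
        have h3 : p m ≤ x := hmem.2
        have h4 : x / 2 < p j := hj.1
        linarith
      calc S.ncard ≤ (Set.Ico m (m + k)).ncard :=
            Set.ncard_le_ncard hsub (Set.finite_Ico _ _)
        _ = k := by
            rw [← Finset.coe_Ico, Set.ncard_coe_finset, Nat.card_Ico]
            omega
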